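/- arXiv:0802.0806 — 3 statements merged into one kernel-verified Lean document; each statement's English description precedes it below -/
import Mathlib

section
/- Let G be a group and M a G-module (abelian group with G-action). If there is a central element z of G that acts on M as multiplication by -1, then the group cohomology H²(G, M) is annihilated by 2. -/
/-!
If `z` is central and `f` is a 2-cocycle, then the coboundary of `g ↦ f (g, z) - f (z, g)` is
`f - ρ(z) ∘ f`, by three instances of the cocycle identity; that is, a central element acts
trivially on `H²`. When `z` acts as `-1`, this exhibits `2 • f` as a coboundary.
-/

open groupCohomology

universe u

namespace groupCohomology

variable {k G : Type u} [CommRing k] [Group G] {A : Rep k G}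

lemma d₁₂_hom_sub_swap_of_mem_center {z : G} (hz : z ∈ Subgroup.center G)
    (f : cocycles₂ A) :
    (d₁₂ A).hom (fun g => f (g, z) - f (z, g)) = fun p => f p - A.ρ z (f p) := by
  have hcocycle := (mem_cocycles₂_iff (f : G × G → A)).1 f.2
  have hcomm := Subgroup.mem_center_iff.1 hz
  funext ⟨g, h⟩
  have h₁ := hcocycle g h z
  have h₂ := hcocycle g z h
  have h₃ := hcocycle z g h
  rw [hcomm h] at h₁
  rw [hcomm g] at h₂
  simp only [d₁₂_hom_apply, map_sub]
  linear_combination (norm := abel) h₂ - h₁ - h₃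

end groupCohomology

/-- "center kills".  Let `G` be a group and `M` a `G`-module.  If some
central element `z` of `G` acts on `M` as multiplication by `-1`, then the group
cohomology `H²(G, M)` is annihilated by `2`. -/
theorem center_kills_H2 (G : Type) [Group G] (M : Rep ℤ G) (z : G)
    (hz : z ∈ Subgroup.center G) (hact : ∀ m : M, M.ρ z m = -m) :
    ∀ x : groupCohomology M 2, (2 : ℤ) • x = 0 := by
  intro x
  induction x using H2_induction_on with | h f => ?_
  rw [two_zsmul, ← map_add, H2π_eq_zero_iff]
  refine ⟨fun g => f (g, z) - f (z, g), ?_⟩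
  rw [d₁₂_hom_sub_swap_of_mem_center hz f]
  funext p
  simp only [hact, sub_neg_eq_add]
  rfl
end

section
/- Let Γ be a group and for each n ≥ 1 let DⁿΓ be the set of g ∈ Γ such that some positive power of g lies in the n-th term LⁿΓ of the lower central series. Then DⁿΓ is a subgroup of Γ, it is normal (indeed characteristic), and Γ/DⁿΓ is torsion-free. -/
/-!
Modulo `L = LⁿΓ` the group `Γ/L` is nilpotent, and `DⁿΓ` is the preimage of the elements of finite
order of `Γ/L`; so it suffices that in a nilpotent group these form a subgroup. Passing to the
subgroup generated by two elements of finite order, one shows that a nilpotent group generated by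
elements of finite order is torsion, by induction on the length of its lower central series: if
`γₖ₊₁ = 1` then `γₖ` is central, and for `p ∈ γₖ₋₁` the map `q ↦ ⁅p, q⁆` is a homomorphism into the
centre, so `γₖ` is generated by central elements of finite order and is torsion, while `G/γₖ` is
torsion by induction.
-/

open Subgroup

open scoped commutatorElement

section

variable {G : Type*} [Group G]

theorem isOfFinOrder_of_mem_closure_of_subset_center {s : Set G} (hs : s ⊆ center G)
    (hfin : ∀ x ∈ s, IsOfFinOrder x) {x : G} (hx : x ∈ closure s) : IsOfFinOrder x := by
  have hcentral : closure s ≤ center G := closure_le _ |>.mpr hs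
  induction hx using closure_induction with
  | mem x hx => exact hfin x hx
  | one => exact IsOfFinOrder.one
  | mul x y _ hy hx' hy' =>
    exact Commute.isOfFinOrder_mul (mem_center_iff.mp (hcentral hy) x) hx' hy'
  | inv x _ hx' => exact hx'.inv

def commutatorElementHom (p : G) (hp : ∀ q, ⁅p, q⁆ ∈ center G) : G →* G :=
  MonoidHom.mk' (fun q => ⁅p, q⁆) fun q r => by
    rw [commutatorElement_mul_right_eq_mul_conj, mul_assoc _ q, mem_center_iff.mp (hp r) q,
      ← mul_assoc, mul_inv_cancel_right]

theorem isOfFinOrder_commutatorElement_of_closure_eq_top {s : Set G} (hs : closure s = ⊤)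
    (hfin : ∀ x ∈ s, IsOfFinOrder x) {p : G} (hp : ∀ q, ⁅p, q⁆ ∈ center G) (q : G) :
    IsOfFinOrder ⁅p, q⁆ := by
  let f := commutatorElementHom p hp
  have hq : f q ∈ closure (f '' s) := by
    rw [← MonoidHom.map_closure, hs]
    exact mem_map_of_mem f (mem_top q)
  refine isOfFinOrder_of_mem_closure_of_subset_center ?_ ?_ hq
  · rintro _ ⟨x, -, rfl⟩
    exact hp x
  · rintro _ ⟨x, hx, rfl⟩
    exact f.isOfFinOrder (hfin x hx)

theorem isOfFinOrder_of_mem_lowerCentralSeries_of_le_center {s : Set G} (hs : closure s = ⊤)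
    (hfin : ∀ x ∈ s, IsOfFinOrder x) {k : ℕ}
    (hk : (⊤ : Subgroup G).lowerCentralSeries k ≤ center G) {x : G}
    (hx : x ∈ (⊤ : Subgroup G).lowerCentralSeries k) : IsOfFinOrder x := by
  cases k with
  | zero =>
    rw [Subgroup.lowerCentralSeries_zero, ← hs] at hk hx
    exact isOfFinOrder_of_mem_closure_of_subset_center (subset_closure.trans hk) hfin hx
  | succ j =>
    refine isOfFinOrder_of_mem_closure_of_subset_center ?_ ?_ hx
    · rintro _ ⟨p, hp, q, hq, rfl⟩
      exact hk (commutator_mem_commutator hp hq)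
    · rintro _ ⟨p, hp, q, -, rfl⟩
      exact isOfFinOrder_commutatorElement_of_closure_eq_top hs hfin
        (fun q => hk (commutator_mem_commutator hp (mem_top q))) q

theorem lowerCentralSeries_quotient_eq_bot (N : Subgroup G) [N.Normal] (n : ℕ)
    (hN : (⊤ : Subgroup G).lowerCentralSeries n ≤ N) :
    (⊤ : Subgroup (G ⧸ N)).lowerCentralSeries n = ⊥ := by
  rw [← map_top_of_surjective _ (QuotientGroup.mk'_surjective N), ← map_lowerCentralSeries,
    Subgroup.map_eq_bot_iff, QuotientGroup.ker_mk']
  exact hN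

theorem IsOfFinOrder.of_quotient {N : Subgroup G} [N.Normal] (hN : ∀ y ∈ N, IsOfFinOrder y)
    {x : G} (hx : IsOfFinOrder (x : G ⧸ N)) : IsOfFinOrder x := by
  obtain ⟨m, hm, hxm⟩ := isOfFinOrder_iff_pow_eq_one.mp hx
  rw [← QuotientGroup.mk_pow, QuotientGroup.eq_one_iff] at hxm
  exact (hN _ hxm).of_pow hm.ne'

theorem isMulTorsion_of_lowerCentralSeries_eq_bot {k : ℕ}
    (hk : (⊤ : Subgroup G).lowerCentralSeries k = ⊥) {s : Set G} (hs : closure s = ⊤)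
    (hfin : ∀ x ∈ s, IsOfFinOrder x) : IsMulTorsion G := by
  intro x
  induction k generalizing G with
  | zero =>
    rw [(eq_bot_iff_forall _).mp hk x (mem_top x)]
    exact IsOfFinOrder.one
  | succ k ih =>
    set N := (⊤ : Subgroup G).lowerCentralSeries k
    have hcentral : N ≤ center G := by
      have := commutator_eq_bot_iff_le_centralizer.mp hk
      rwa [coe_top, centralizer_univ] at this
    let π := QuotientGroup.mk' N
    have hπs : closure (π '' s) = ⊤ := by
      rw [← MonoidHom.map_closure, hs, map_top_of_surjective _ (QuotientGroup.mk'_surjective N)]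
    refine IsOfFinOrder.of_quotient
      (fun y hy => isOfFinOrder_of_mem_lowerCentralSeries_of_le_center hs hfin hcentral hy) ?_
    refine ih (lowerCentralSeries_quotient_eq_bot N k le_rfl) hπs ?_ (π x)
    rintro _ ⟨y, hy, rfl⟩
    exact π.isOfFinOrder (hfin y hy)

theorem Group.IsNilpotent.isOfFinOrder_mul [Group.IsNilpotent G] {x y : G} (hx : IsOfFinOrder x)
    (hy : IsOfFinOrder y) : IsOfFinOrder (x * y) := by
  let H := closure ({x, y} : Set G)
  obtain ⟨k, hk⟩ :=
    Subgroup.nilpotent_iff_lowerCentralSeries.mp (inferInstance : Group.IsNilpotent H)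
  have hxy := isMulTorsion_of_lowerCentralSeries_eq_bot hk (closure_preimage_eq_top {x, y}) ?_
    (⟨x, subset_closure (by simp)⟩ * ⟨y, subset_closure (by simp)⟩)
  · exact H.subtype.isOfFinOrder hxy
  · rintro z (hz | hz) <;> rw [← Submonoid.isOfFinOrder_coe] <;> simp_all

def nilpotentTorsion (G : Type*) [Group G] [Group.IsNilpotent G] : Subgroup G where
  carrier := {x | IsOfFinOrder x}
  mul_mem' := Group.IsNilpotent.isOfFinOrder_mul
  one_mem' := IsOfFinOrder.one
  inv_mem' := IsOfFinOrder.inv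

theorem coe_comap_nilpotentTorsion_mk' (N : Subgroup G) [N.Normal]
    [Group.IsNilpotent (G ⧸ N)] :
    ((nilpotentTorsion (G ⧸ N)).comap (QuotientGroup.mk' N) : Set G) =
      {g | ∃ m : ℕ, 0 < m ∧ g ^ m ∈ N} := by
  ext g
  simp only [coe_comap, Set.mem_preimage, QuotientGroup.mk'_apply, SetLike.mem_coe]
  change IsOfFinOrder (g : G ⧸ N) ↔ _
  simp only [isOfFinOrder_iff_pow_eq_one, ← QuotientGroup.mk_pow, QuotientGroup.eq_one_iff,
    Set.mem_ofPred_eq]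

theorem characteristic_of_coe_eq_setOf_pow_mem {N D : Subgroup G} [N.Characteristic]
    (hD : (D : Set G) = {g | ∃ m : ℕ, 0 < m ∧ g ^ m ∈ N}) : D.Characteristic := by
  refine characteristic_iff_comap_eq.mpr fun ϕ => SetLike.coe_injective ?_
  have hN (x : G) : ϕ x ∈ N ↔ x ∈ N :=
    SetLike.ext_iff.mp (characteristic_iff_comap_eq.mp ‹_› ϕ) x
  ext g
  simp only [coe_comap, hD, Set.mem_preimage, Set.mem_ofPred_eq, MulEquiv.coe_toMonoidHom,
    ← map_pow, hN]

theorem mem_of_pow_mem_of_coe_eq_setOf_pow_mem {N D : Subgroup G}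
    (hD : (D : Set G) = {g | ∃ m : ℕ, 0 < m ∧ g ^ m ∈ N}) {g : G} {m : ℕ} (hm : 0 < m)
    (hgm : g ^ m ∈ D) : g ∈ D := by
  rw [← SetLike.mem_coe, hD] at hgm ⊢
  obtain ⟨k, hk, hgmk⟩ := hgm
  exact ⟨m * k, Nat.mul_pos hm hk, by rwa [pow_mul]⟩

end

/-- For a group `Γ` let `DⁿΓ` be the set of `g ∈ Γ` some positive power
of which lies in the `n`-th term of the lower central series (`L¹Γ = Γ`, i.e. index `n`
corresponds to `lowerCentralSeries Γ n` with Mathlib's `0`-based indexing).  Then `DⁿΓ`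
is a subgroup, it is normal (indeed characteristic), and `Γ/DⁿΓ` is torsion-free (i.e.
`DⁿΓ` is closed under taking roots). -/
theorem rational_dimension_subgroup (Γ : Type*) [Group Γ] (n : ℕ) :
    ∃ D : Subgroup Γ,
      (D : Set Γ) = {g : Γ | ∃ m : ℕ, 0 < m ∧ g ^ m ∈ Subgroup.lowerCentralSeries (⊤ : Subgroup Γ) n} ∧
      D.Normal ∧ D.Characteristic ∧
      (∀ (g : Γ) (m : ℕ), 0 < m → g ^ m ∈ D → g ∈ D) := by
  set L := (⊤ : Subgroup Γ).lowerCentralSeries n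
  have : Group.IsNilpotent (Γ ⧸ L) := Subgroup.nilpotent_iff_lowerCentralSeries.mpr
    ⟨n, lowerCentralSeries_quotient_eq_bot L n le_rfl⟩
  have hD := coe_comap_nilpotentTorsion_mk' L
  have := characteristic_of_coe_eq_setOf_pow_mem hD
  exact ⟨_, hD, inferInstance, this, fun g m hm => mem_of_pow_mem_of_coe_eq_setOf_pow_mem hD hm⟩
end

section
/- Let Γ be a group, N a normal subgroup with Γ/N nilpotent, and S a set of primes. Define √[S]{N} = {g ∈ Γ : ∃ m > 0 with all prime divisors of m in S and g^m ∈ N}. Then √[S]{N} is a normal subgroup of Γ containing N. -/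
/-!
In a nilpotent group `G`, finitely many elements whose orders are `S`-numbers generate a finite
subgroup `H` of `S`-number order. This goes by induction on the nilpotency class: the image of `H`
in `G ⧸ Z(G)` is such a group, so the centre of `H` has `S`-number index; by Schur's theorem
`|[H, H]|` divides a power of that index, and `H ⧸ [H, H]` is a finite abelian group generated by
`S`-elements. Hence the `S`-elements of `Γ ⧸ N` form a normal subgroup, and `√[S]{N}` is its
preimage in `Γ`.
-/

open Subgroup
open scoped commutatorElement

def IsSNumber (S : Set ℕ) (m : ℕ) : Prop :=
  0 < m ∧ ∀ p : ℕ, p.Prime → p ∣ m → p ∈ S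

namespace IsSNumber

variable {S : Set ℕ} {m n : ℕ}

theorem one : IsSNumber S 1 :=
  ⟨one_pos, fun _ hp hdvd => absurd (Nat.dvd_one.mp hdvd) hp.ne_one⟩

theorem mul (hm : IsSNumber S m) (hn : IsSNumber S n) : IsSNumber S (m * n) :=
  ⟨Nat.mul_pos hm.1 hn.1, fun p hp hdvd =>
    (hp.dvd_mul.mp hdvd).elim (hm.2 p hp) (hn.2 p hp)⟩

theorem of_dvd (hn : IsSNumber S n) (hmn : m ∣ n) : IsSNumber S m :=
  ⟨Nat.pos_of_dvd_of_pos hmn hn.1, fun p hp hdvd => hn.2 p hp (hdvd.trans hmn)⟩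

theorem pow (hm : IsSNumber S m) (k : ℕ) : IsSNumber S (m ^ k) := by
  induction k with
  | zero => exact one
  | succ k ih => exact pow_succ m k ▸ ih.mul hm

-- By Cauchy's theorem a prime dividing `|G|` is the order of an element, hence divides `n`.
theorem natCard_of_forall_pow_eq_one {G : Type*} [Group G] [Finite G] (hn : IsSNumber S n)
    (h : ∀ g : G, g ^ n = 1) : IsSNumber S (Nat.card G) := by
  refine ⟨Nat.card_pos, fun p hp hdvd => hn.2 p hp ?_⟩
  have := Fact.mk hp
  obtain ⟨g, hg⟩ := exists_prime_orderOf_dvd_card' p hdvd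
  exact hg ▸ orderOf_dvd_of_pow_eq_one (h g)

end IsSNumber

section Commutators

variable {G : Type*} [Group G]

theorem commutatorElement_mul_center_mul_center (g h : G) {z w : G} (hz : z ∈ center G)
    (hw : w ∈ center G) : ⁅g * z, h * w⁆ = ⁅g, h⁆ := by
  rw [commutatorElement_mul_left_eq_conj_mul,
    commutatorElement_eq_one_iff_commute.mpr (mem_center_iff.mp hz _).symm,
    commutatorElement_mul_right_eq_mul_conj,
    commutatorElement_eq_one_iff_commute.mpr (mem_center_iff.mp hw _)]
  group

theorem finite_commutatorSet_of_finiteIndex_center [(center G).FiniteIndex] :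
    Finite (commutatorSet G) := by
  have out_comm (g h : G) :
      ⁅(g : G ⧸ center G).out, (h : G ⧸ center G).out⁆ = ⁅g, h⁆ := by
    obtain ⟨z, hz⟩ := QuotientGroup.mk_out_eq_mul (center G) g
    obtain ⟨w, hw⟩ := QuotientGroup.mk_out_eq_mul (center G) h
    rw [hz, hw, commutatorElement_mul_center_mul_center g h z.2 w.2]
  refine Set.Finite.to_subtype ((Set.finite_range fun q : (G ⧸ center G) × (G ⧸ center G) =>
    ⁅q.1.out, q.2.out⁆).subset ?_)
  rintro _ ⟨g, h, rfl⟩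
  exact ⟨(g, h), out_comm g h⟩

end Commutators

section SGroups

variable {S : Set ℕ} {k : ℕ}

theorem Abelianization.pow_eq_one_of_closure_eq_top {G : Type*} [Group G] {s : Set G}
    (hs : closure s = ⊤) (hsk : ∀ g ∈ s, g ^ k = 1) (x : Abelianization G) : x ^ k = 1 := by
  obtain ⟨g, rfl⟩ : ∃ g, Abelianization.of g = x := QuotientGroup.mk_surjective x
  have hle : closure s ≤ (powMonoidHom k).ker.comap Abelianization.of :=
    (closure_le _).mpr fun g hg => by simp [← map_pow, hsk g hg]
  simpa using hle (hs ▸ mem_top g)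

theorem Abelianization.isSNumber_natCard {G : Type*} [Group G] {s : Set G} (hs : closure s = ⊤)
    (hsf : s.Finite) (hk : IsSNumber S k) (hsk : ∀ g ∈ s, g ^ k = 1) :
    IsSNumber S (Nat.card (Abelianization G)) := by
  have hpow := Abelianization.pow_eq_one_of_closure_eq_top hs hsk
  have : Group.FG G := ⟨⟨hsf.toFinset, by simpa using hs⟩⟩
  have : Group.FG (Abelianization G) :=
    Group.fg_of_surjective (f := Abelianization.of) QuotientGroup.mk_surjective
  have : Finite (Abelianization G) := CommGroup.finite_of_fg_isMulTorsion _ fun x =>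
    isOfFinOrder_iff_pow_eq_one.mpr ⟨k, hk.1, hpow x⟩
  exact hk.natCard_of_forall_pow_eq_one hpow

-- Schur: `|[G, G]|` divides a power of `[G : Z(G)]`.
theorem isSNumber_natCard_of_isSNumber_index_center {G : Type*} [Group G] {s : Set G}
    (hs : closure s = ⊤) (hsf : s.Finite) (hk : IsSNumber S k) (hsk : ∀ g ∈ s, g ^ k = 1)
    (hZ : IsSNumber S (center G).index) : IsSNumber S (Nat.card G) := by
  have : (center G).FiniteIndex := ⟨hZ.1.ne'⟩
  have := finite_commutatorSet_of_finiteIndex_center (G := G)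
  have hcomm : IsSNumber S (Nat.card (commutator G)) :=
    (hZ.pow _).of_dvd (card_commutator_dvd_index_center_pow G)
  rw [card_eq_card_quotient_mul_card_subgroup (commutator G)]
  exact (Abelianization.isSNumber_natCard hs hsf hk hsk).mul hcomm

theorem isSNumber_natCard_closure {G : Type*} [Group G] [Group.IsNilpotent G]
    (hk : IsSNumber S k) {s : Set G} (hsf : s.Finite) (hsk : ∀ g ∈ s, g ^ k = 1) :
    IsSNumber S (Nat.card (closure s)) := by
  refine Group.nilpotent_center_quotient_ind (P := fun G _ _ => ∀ s : Set G, s.Finite →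
    (∀ g ∈ s, g ^ k = 1) → IsSNumber S (Nat.card (closure s))) G ?_ ?_ s hsf hsk
  · intro G _ _ s _ _
    simpa [Nat.card_unique] using IsSNumber.one
  · intro G _ _ ih s hsf hsk
    let φ : closure s →* G ⧸ center G :=
      (QuotientGroup.mk' (center G)).comp (closure s).subtype
    have hrange : φ.range = Subgroup.closure (QuotientGroup.mk '' s) := by
      rw [MonoidHom.range_comp, range_subtype, MonoidHom.map_closure]; rfl
    have hker : φ.ker ≤ center (closure s) := fun x hx =>
      mem_center_iff.mpr fun y => Subtype.ext <|
        mem_center_iff.mp ((QuotientGroup.eq_one_iff (x : G)).mp hx) y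
    have hZ : IsSNumber S (center (closure s)).index := by
      refine IsSNumber.of_dvd ?_ (index_dvd_of_le hker)
      rw [index_ker, hrange]
      refine ih _ (hsf.image _) ?_
      rintro _ ⟨g, hg, rfl⟩
      rw [← QuotientGroup.mk_pow, hsk g hg, QuotientGroup.mk_one]
    exact isSNumber_natCard_of_isSNumber_index_center closure_closure_coe_preimage
      (hsf.preimage Subtype.val_injective.injOn) hk (fun g hg => Subtype.ext (hsk g hg)) hZ

end SGroups

section STorsion

variable {S : Set ℕ} {G : Type*} [Group G] [Group.IsNilpotent G]

theorem exists_isSNumber_mul_pow_eq_one {a b : G} {m n : ℕ} (hm : IsSNumber S m)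
    (hn : IsSNumber S n) (ha : a ^ m = 1) (hb : b ^ n = 1) :
    ∃ k, IsSNumber S k ∧ (a * b) ^ k = 1 := by
  have hab : ∀ g ∈ ({a, b} : Set G), g ^ (m * n) = 1 := by
    rintro _ (rfl | rfl)
    · rw [pow_mul, ha, one_pow]
    · rw [mul_comm, pow_mul, hb, one_pow]
  refine ⟨_, isSNumber_natCard_closure (hm.mul hn) (Set.toFinite _) hab, ?_⟩
  have hmem : a * b ∈ closure ({a, b} : Set G) :=
    mul_mem (subset_closure (Set.mem_insert a _)) (subset_closure (Set.mem_insert_of_mem a rfl))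
  exact congrArg Subtype.val (pow_card_eq_one' (x := (⟨a * b, hmem⟩ : closure {a, b})))

variable (S G) in
def sTorsion : Subgroup G where
  carrier := {g | ∃ m, IsSNumber S m ∧ g ^ m = 1}
  one_mem' := ⟨1, IsSNumber.one, one_pow 1⟩
  mul_mem' := fun ⟨_, hm, ha⟩ ⟨_, hn, hb⟩ => exists_isSNumber_mul_pow_eq_one hm hn ha hb
  inv_mem' := fun ⟨m, hm, ha⟩ => ⟨m, hm, by rw [inv_pow, ha, inv_one]⟩

theorem mem_sTorsion {g : G} : g ∈ sTorsion S G ↔ ∃ m, IsSNumber S m ∧ g ^ m = 1 :=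
  Iff.rfl

instance : (sTorsion S G).Normal :=
  ⟨fun _ ⟨m, hm, hg⟩ h => ⟨m, hm, by rw [conj_pow, hg, mul_one, mul_inv_cancel]⟩⟩

end STorsion

theorem S_root_of_normal_subgroup_general (Γ : Type*) [Group Γ] (N : Subgroup Γ) [N.Normal]
    [Group.IsNilpotent (Γ ⧸ N)] (S : Set ℕ) :
    ∃ R : Subgroup Γ, R.Normal ∧ N ≤ R ∧
      (R : Set Γ) = {g : Γ | ∃ m : ℕ, 0 < m ∧
        (∀ p : ℕ, p.Prime → p ∣ m → p ∈ S) ∧ g ^ m ∈ N} := by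
  refine ⟨(sTorsion S (Γ ⧸ N)).comap (QuotientGroup.mk' N), inferInstance,
    (QuotientGroup.ker_mk' N).symm.le.trans (MonoidHom.ker_le_comap _ _), ?_⟩
  ext g
  simp only [SetLike.mem_coe, mem_comap, QuotientGroup.mk'_apply, mem_sTorsion, IsSNumber,
    and_assoc, ← QuotientGroup.mk_pow, QuotientGroup.eq_one_iff, Set.mem_ofPred_eq]

/-- Let `Γ` be a group, `N` a normal subgroup with `Γ/N` nilpotent, and
`S` a set of primes.  Then `√[S]{N} = {g ∈ Γ : ∃ m > 0 with supp(m) ⊆ S and g^m ∈ N}`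
is a normal subgroup of `Γ` containing `N`. -/
theorem S_root_of_normal_subgroup (Γ : Type*) [Group Γ] (N : Subgroup Γ) [N.Normal]
    [Group.IsNilpotent (Γ ⧸ N)] (S : Set ℕ) (hS : ∀ p ∈ S, p.Prime) :
    ∃ R : Subgroup Γ, R.Normal ∧ N ≤ R ∧
      (R : Set Γ) = {g : Γ | ∃ m : ℕ, 0 < m ∧
        (∀ p : ℕ, p.Prime → p ∣ m → p ∈ S) ∧ g ^ m ∈ N} :=
  S_root_of_normal_subgroup_general Γ N S
end
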